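/- Let φ be an isomorphism between graphs H₁ and H₂ that maps the degree-2 vertex sets C₁ onto C₂ bijectively (where H_i is constructed from connected bipartite G_i with parts of size ≥ 3). Then the map sending each vertex v of G₁ to φ(v) is an isomorphism from G₁ to G₂, where edges correspond via e ↦ f whenever φ(c_e) = c_f. -/

import Mathlib

/-- The graph `H` built from a bipartite graph `G` with bipartition `(A, B)`:
vertices are `A ∪ B` (the original vertices) together with one new vertex `c_e`
per edge `e`; all edges between `A` and `B` are present, and each `c_e` is
adjacent exactly to the two endpoints of `e`. -/
def Hgraph {V : Type*} (G : SimpleGraph V) (A B : Set V) :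
    SimpleGraph (V ⊕ G.edgeSet) where
  Adj x y :=
    match x, y with
    | Sum.inl u, Sum.inl v => u ≠ v ∧ ((u ∈ A ∧ v ∈ B) ∨ (u ∈ B ∧ v ∈ A))
    | Sum.inl u, Sum.inr e => u ∈ (e : Sym2 V)
    | Sum.inr e, Sum.inl u => u ∈ (e : Sym2 V)
    | Sum.inr _, Sum.inr _ => False
  symm := by
    constructor
    rintro (u | e) (v | f) h <;> simp_all <;> tauto
  loopless := by
    constructor
    rintro (u | e) h <;> simp_all

/-- The order relation of the poset `P_H` on `A ∪ B ∪ C`: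
`a ⪯ b` for `a ∈ A`, `b ∈ B`; `a ⪯ c_e` iff `a ∈ A` is an endpoint of `e`;
`c_e ⪯ b` iff `b ∈ B` is an endpoint of `e`; plus reflexivity. -/
def PHle {V : Type*} (G : SimpleGraph V) (A B : Set V) :
    (V ⊕ G.edgeSet) → (V ⊕ G.edgeSet) → Prop
  | Sum.inl u, Sum.inl v => u = v ∨ (u ∈ A ∧ v ∈ B)
  | Sum.inl u, Sum.inr e => u ∈ A ∧ u ∈ (e : Sym2 V)
  | Sum.inr e, Sum.inl v => v ∈ B ∧ v ∈ (e : Sym2 V)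
  | Sum.inr e, Sum.inr f => e = f

/-! An original vertex of `H` has at least three neighbours (a vertex of `A` sees all of `B`,
and vice versa), while a subdivision vertex `c_e` has at most two, so `φ` maps `V₁` into `V₂`.
As `φ` also maps `C₁` into `C₂`, it restricts to bijections `V₁ ≃ V₂` and `E(G₁) ≃ E(G₂)`, and
distinct `u`, `v` are adjacent in `G` exactly when they have a common neighbour in `C`. -/

open Set

lemma Sum.exists_apply_inl_eq_inl {α β γ δ : Type*} {f : α ⊕ β → γ ⊕ δ} (hf : f.Surjective)
    (hr : ∀ b, ∃ d, f (.inr b) = .inr d) (c : γ) : ∃ a, f (.inl a) = .inl c := by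
  obtain ⟨a | b, hx⟩ := hf (.inl c)
  · exact ⟨a, hx⟩
  · obtain ⟨d, hd⟩ := hr b
    exact absurd (hd.symm.trans hx) Sum.inr_ne_inl

lemma Sum.exists_apply_inr_eq_inr {α β γ δ : Type*} {f : α ⊕ β → γ ⊕ δ} (hf : f.Surjective)
    (hl : ∀ a, ∃ c, f (.inl a) = .inl c) (d : δ) : ∃ b, f (.inr b) = .inr d := by
  obtain ⟨a | b, hx⟩ := hf (.inr d)
  · obtain ⟨c, hc⟩ := hl a
    exact absurd (hc.symm.trans hx) Sum.inl_ne_inr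
  · exact ⟨b, hx⟩

lemma SimpleGraph.Iso.encard_neighborSet_apply {V W : Type*} {G : SimpleGraph V}
    {G' : SimpleGraph W} (φ : G ≃g G') (v : V) :
    (G'.neighborSet (φ v)).encard = (G.neighborSet v).encard := by
  rw [← φ.image_neighborSet, φ.injective.encard_image]

namespace Hgraph

variable {V : Type*} {G : SimpleGraph V} {A B : Set V}

@[simp]
lemma adj_inl_inr {u : V} {e : G.edgeSet} :
    (Hgraph G A B).Adj (.inl u) (.inr e) ↔ u ∈ (e : Sym2 V) := Iff.rfl

lemma comm : Hgraph G A B = Hgraph G B A := by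
  ext (u | e) (v | f) <;> simp only [Hgraph, or_comm]

lemma adj_iff_exists_adj_inr {u v : V} (huv : u ≠ v) :
    G.Adj u v ↔ ∃ e : G.edgeSet,
      (Hgraph G A B).Adj (.inl u) (.inr e) ∧ (Hgraph G A B).Adj (.inl v) (.inr e) := by
  refine ⟨fun h ↦ ⟨⟨s(u, v), h⟩, by simp, by simp⟩, ?_⟩
  rintro ⟨⟨e, he⟩, hu, hv⟩
  have he_eq : e = s(u, v) := (Sym2.mem_and_mem_iff huv).1 ⟨hu, hv⟩
  rwa [he_eq, SimpleGraph.mem_edgeSet] at he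

lemma neighborSet_inr (e : G.edgeSet) :
    (Hgraph G A B).neighborSet (.inr e) = Sum.inl '' {u | u ∈ (e : Sym2 V)} := by
  ext (u | f) <;> simp [Hgraph]

lemma encard_neighborSet_inr_le_two (e : G.edgeSet) :
    ((Hgraph G A B).neighborSet (.inr e)).encard ≤ 2 := by
  obtain ⟨z, hz⟩ := e
  induction z using Sym2.ind with
  | h a b =>
    calc ((Hgraph G A B).neighborSet (.inr ⟨s(a, b), hz⟩)).encard
        ≤ {u | u ∈ s(a, b)}.encard := neighborSet_inr (A := A) (B := B) _ ▸ encard_image_le _ _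
      _ = ({a, b} : Set V).encard := by congr 1; ext; simp
      _ ≤ ({b} : Set V).encard + 1 := encard_insert_le _ _
      _ = 2 := by rw [encard_singleton]; rfl

lemma three_le_encard_neighborSet_inl_of_mem_left (hdisj : Disjoint A B) (hB : 3 ≤ B.ncard)
    {v : V} (hv : v ∈ A) : 3 ≤ ((Hgraph G A B).neighborSet (.inl v)).encard := by
  have hBinl : Sum.inl '' B ⊆ (Hgraph G A B).neighborSet (.inl v) := by
    rintro _ ⟨b, hb, rfl⟩
    exact ⟨hdisj.ne_of_mem hv hb, .inl ⟨hv, hb⟩⟩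
  calc 3 ≤ B.encard := by
        rw [← (finite_of_ncard_pos (by omega)).cast_ncard_eq]
        exact_mod_cast hB
    _ = (Sum.inl '' B : Set (V ⊕ G.edgeSet)).encard := (Sum.inl_injective.encard_image B).symm
    _ ≤ _ := encard_le_encard hBinl

lemma three_le_encard_neighborSet_inl (hdisj : Disjoint A B) (hcover : A ∪ B = univ)
    (hA : 3 ≤ A.ncard) (hB : 3 ≤ B.ncard) (v : V) :
    3 ≤ ((Hgraph G A B).neighborSet (.inl v)).encard := by
  rcases hcover ▸ mem_univ v with hv | hv
  · exact three_le_encard_neighborSet_inl_of_mem_left hdisj hB hv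
  · exact comm (A := A) ▸ three_le_encard_neighborSet_inl_of_mem_left hdisj.symm hA hv

variable {W : Type*} {G' : SimpleGraph W} {A' B' : Set W}

lemma exists_iso_apply_inl_eq_inl (φ : Hgraph G A B ≃g Hgraph G' A' B') (hdisj : Disjoint A B)
    (hcover : A ∪ B = univ) (hA : 3 ≤ A.ncard) (hB : 3 ≤ B.ncard) (v : V) :
    ∃ w, φ (.inl v) = .inl w := by
  rcases h : φ (.inl v) with w | f
  · exact ⟨w, rfl⟩
  · have h3 := three_le_encard_neighborSet_inl (G := G) hdisj hcover hA hB v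
    rw [← φ.encard_neighborSet_apply, h] at h3
    exact absurd (h3.trans (encard_neighborSet_inr_le_two f)) (by decide)

lemma exists_iso_of_iso_map_inl_map_inr (φ : Hgraph G A B ≃g Hgraph G' A' B')
    (hl : ∀ v, ∃ w, φ (.inl v) = .inl w) (hr : ∀ e, ∃ f, φ (.inr e) = .inr f) :
    ∃ ψ : G ≃g G', ∀ v, φ (.inl v) = .inl (ψ v) := by
  have hl' := Sum.exists_apply_inl_eq_inl φ.surjective hr
  have hr' := Sum.exists_apply_inr_eq_inr φ.surjective hl
  choose g hg using hl
  choose k hk using hr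
  have hg_inj : g.Injective := fun u v huv ↦
    Sum.inl_injective <| φ.injective <| by rw [hg, hg, huv]
  have hg_surj : g.Surjective := fun w ↦
    (hl' w).imp fun v hv ↦ Sum.inl_injective <| (hg v).symm.trans hv
  have hk_surj : k.Surjective := fun f ↦
    (hr' f).imp fun e he ↦ Sum.inr_injective <| (hk e).symm.trans he
  refine ⟨⟨.ofBijective g ⟨hg_inj, hg_surj⟩, fun {u v} ↦ ?_⟩, hg⟩
  obtain rfl | huv := eq_or_ne u v
  · simp
  show G'.Adj (g u) (g v) ↔ G.Adj u v
  rw [adj_iff_exists_adj_inr (A := A') (B := B') (hg_inj.ne huv), hk_surj.exists,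
    adj_iff_exists_adj_inr (A := A) (B := B) huv]
  simp only [← hg, ← hk, φ.map_adj_iff]

end Hgraph

theorem induced_iso_of_Hgraph_iso_general
    {V₁ V₂ : Type*}
    (G₁ : SimpleGraph V₁) (G₂ : SimpleGraph V₂)
    (A₁ B₁ : Set V₁) (A₂ B₂ : Set V₂)
    (hdisj₁ : Disjoint A₁ B₁) (hcover₁ : A₁ ∪ B₁ = Set.univ)
    (hA₁ : 3 ≤ A₁.ncard) (hB₁ : 3 ≤ B₁.ncard)
    (φ : Hgraph G₁ A₁ B₁ ≃g Hgraph G₂ A₂ B₂)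
    (hC : ∀ e : G₁.edgeSet, ∃ f : G₂.edgeSet, φ (Sum.inr e) = Sum.inr f) :
    ∃ ψ : G₁ ≃g G₂, ∀ v : V₁, φ (Sum.inl v) = Sum.inl (ψ v) :=
  Hgraph.exists_iso_of_iso_map_inl_map_inr φ
    (Hgraph.exists_iso_apply_inl_eq_inl φ hdisj₁ hcover₁ hA₁ hB₁) hC

/-- If an isomorphism `φ : H₁ ≃ H₂` maps the subdivision vertices `C₁` into
`C₂`, then `φ` restricted to the original vertices is an isomorphism from
`G₁` to `G₂`. -/
theorem induced_iso_of_Hgraph_iso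
    {V₁ V₂ : Type*} [Finite V₁] [Finite V₂]
    (G₁ : SimpleGraph V₁) (G₂ : SimpleGraph V₂)
    (A₁ B₁ : Set V₁) (A₂ B₂ : Set V₂)
    (hconn₁ : G₁.Connected) (hconn₂ : G₂.Connected)
    (hdisj₁ : Disjoint A₁ B₁) (hcover₁ : A₁ ∪ B₁ = Set.univ)
    (hedge₁ : ∀ e : G₁.edgeSet, ∃ a ∈ A₁, ∃ b ∈ B₁, (e : Sym2 V₁) = s(a, b))
    (hdisj₂ : Disjoint A₂ B₂) (hcover₂ : A₂ ∪ B₂ = Set.univ)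
    (hedge₂ : ∀ e : G₂.edgeSet, ∃ a ∈ A₂, ∃ b ∈ B₂, (e : Sym2 V₂) = s(a, b))
    (hA₁ : 3 ≤ A₁.ncard) (hB₁ : 3 ≤ B₁.ncard)
    (hA₂ : 3 ≤ A₂.ncard) (hB₂ : 3 ≤ B₂.ncard)
    (φ : Hgraph G₁ A₁ B₁ ≃g Hgraph G₂ A₂ B₂)
    (hC : ∀ e : G₁.edgeSet, ∃ f : G₂.edgeSet, φ (Sum.inr e) = Sum.inr f) :
    ∃ ψ : G₁ ≃g G₂, ∀ v : V₁, φ (Sum.inl v) = Sum.inl (ψ v) :=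
  induced_iso_of_Hgraph_iso_general G₁ G₂ A₁ B₁ A₂ B₂ hdisj₁ hcover₁ hA₁ hB₁ φ hC
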